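/- arXiv:1909.05605 — 5 statements merged into one kernel-verified Lean document; each statement's English description precedes it below -/
import Mathlib

section
/- Let m ≥ 2 be an integer with m ≡ 1 (mod 4), let f(x) = x^m on ℤ_2, and let t = ν_2(m − 1) (so t ≥ 2). Then for every integer l ≥ 0, for every sign ε ∈ {1, −1}, and for every x ∈ ε + 2^(l+2) + 2^(l+3)ℤ_2, one has ν_2(x^m − x) = t + l + 2. -/
/-!
Lifting the exponent at `2`. If `c ≥ 2` and `w` is a unit, then
`(1 + 2^c w)^2 = 1 + 2^(c+1) (w + 2^(c-1) w^2)` with the bracket again a unit, while an odd power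
`(1 + 2^c w)^k - 1 = 2^c w ∑ (1 + 2^c w)^i` keeps the valuation, the geometric sum being `≡ k`
modulo `2`. Hence `v₂((1 + 2^c w)^n - 1) = c + v₂(n)`. For the theorem, `ε x = 1 + 2^(l+2) w` with
`w = ε (1 + 2z)` a unit, and since `m - 1` is even, `x^m - x = x ((ε x)^(m-1) - 1)` has valuation
`l + 2 + v₂(m - 1)`.
-/

namespace PadicInt

variable {p : ℕ} [Fact p.Prime]

theorem isUnit_iff_not_dvd {x : ℤ_[p]} : IsUnit x ↔ ¬(p : ℤ_[p]) ∣ x := by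
  rw [← norm_lt_one_iff_dvd, ← not_isUnit_iff, not_not]

theorem isUnit_add_of_dvd {u a : ℤ_[p]} (hu : IsUnit u) (ha : (p : ℤ_[p]) ∣ a) :
    IsUnit (u + a) :=
  isUnit_iff_not_dvd.2 fun h => isUnit_iff_not_dvd.1 hu (by simpa using dvd_sub h ha)

theorem valuation_eq_zero_of_isUnit {u : ℤ_[p]} (hu : IsUnit u) : u.valuation = 0 := by
  obtain ⟨v, huv⟩ := hu.exists_right_inv
  have := valuation_mul hu.ne_zero (right_ne_zero_of_mul_eq_one huv)
  rw [huv, valuation_one] at this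
  omega

theorem valuation_p_pow_mul_of_isUnit (n : ℕ) {u : ℤ_[p]} (hu : IsUnit u) :
    ((p : ℤ_[p]) ^ n * u).valuation = n := by
  rw [valuation_p_pow_mul n u hu.ne_zero, valuation_eq_zero_of_isUnit hu, add_zero]

theorem isUnit_natCast_of_not_dvd {k : ℕ} (hk : ¬p ∣ k) : IsUnit (k : ℤ_[p]) := by
  rw [isUnit_iff_not_dvd]
  intro h
  have : (p : ℤ_[p]) ^ 1 ∣ ((k : ℤ) : ℤ_[p]) := by simpa using h
  rw [pow_p_dvd_int_iff] at this
  exact hk (Int.natCast_dvd_natCast.1 (by simpa using this))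

theorem exists_isUnit_one_add_pow_mul_pow_of_not_dvd {c k : ℕ} (hc : c ≠ 0) {w : ℤ_[p]}
    (hw : IsUnit w) (hk : ¬p ∣ k) :
    ∃ u : ℤ_[p], IsUnit u ∧ (1 + (p : ℤ_[p]) ^ c * w) ^ k = 1 + (p : ℤ_[p]) ^ c * u := by
  set y := 1 + (p : ℤ_[p]) ^ c * w
  have hpy : (p : ℤ_[p]) ∣ y - 1 := by
    simpa [y] using dvd_mul_of_dvd_left (dvd_pow_self _ hc) w
  have hy : IsUnit y := isUnit_add_of_dvd isUnit_one (by simpa [y] using hpy)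
  have hsum : ¬(p : ℤ_[p]) ∣ ∑ i ∈ Finset.range k, y ^ i := by
    simpa using not_dvd_geom_sum₂ prime_p hpy (isUnit_iff_not_dvd.1 hy)
      (isUnit_iff_not_dvd.1 (isUnit_natCast_of_not_dvd hk))
  refine ⟨w * ∑ i ∈ Finset.range k, y ^ i, hw.mul (isUnit_iff_not_dvd.2 hsum), ?_⟩
  linear_combination (geom_sum_mul y k).symm

theorem exists_isUnit_one_add_two_pow_mul_sq {c : ℕ} (hc : 2 ≤ c) {w : ℤ_[2]} (hw : IsUnit w) :
    ∃ u : ℤ_[2], IsUnit u ∧ (1 + 2 ^ c * w) ^ 2 = 1 + 2 ^ (c + 1) * u := by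
  obtain ⟨d, rfl⟩ := Nat.exists_eq_add_of_le' hc
  refine ⟨w + 2 ^ (d + 1) * w ^ 2, isUnit_add_of_dvd hw ?_, by ring⟩
  exact dvd_mul_of_dvd_left (by simp [pow_succ]) _

theorem exists_isUnit_one_add_two_pow_mul_pow_two_pow {c : ℕ} (hc : 2 ≤ c) {w : ℤ_[2]}
    (hw : IsUnit w) (a : ℕ) :
    ∃ u : ℤ_[2], IsUnit u ∧ (1 + 2 ^ c * w) ^ 2 ^ a = 1 + 2 ^ (c + a) * u := by
  induction a with
  | zero => exact ⟨w, hw, by simp⟩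
  | succ a ih =>
    obtain ⟨u, hu, hpow⟩ := ih
    obtain ⟨u', hu', hsq⟩ := exists_isUnit_one_add_two_pow_mul_sq (by omega : 2 ≤ c + a) hu
    exact ⟨u', hu', by rw [pow_succ, pow_mul, hpow, hsq, add_assoc]⟩

theorem exists_isUnit_one_add_two_pow_mul_pow {c : ℕ} (hc : 2 ≤ c) {w : ℤ_[2]}
    (hw : IsUnit w) {n : ℕ} (hn : n ≠ 0) :
    ∃ u : ℤ_[2], IsUnit u ∧ (1 + 2 ^ c * w) ^ n = 1 + 2 ^ (c + padicValNat 2 n) * u := by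
  obtain ⟨a, k, hk, rfl⟩ := Nat.exists_eq_two_pow_mul_odd hn
  have hk2 : ¬2 ∣ k := hk.not_two_dvd_nat
  obtain ⟨u, hu, hpow⟩ := exists_isUnit_one_add_two_pow_mul_pow_two_pow hc hw a
  obtain ⟨u', hu', hodd⟩ :=
    exists_isUnit_one_add_pow_mul_pow_of_not_dvd (p := 2) (c := c + a) (by omega) hu hk2
  refine ⟨u', hu', ?_⟩
  rw [padicValNat.mul (by positivity) hk.pos.ne', padicValNat.prime_pow,
    padicValNat.eq_zero_of_not_dvd hk2, add_zero, pow_mul, hpow]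
  exact_mod_cast hodd

end PadicInt

open PadicInt in
/-- For `m ≡ 1 (mod 4)`, `t = ν_2(m-1) ≥ 2`, and any `l ≥ 0`, `ε = ±1`, and
`x ∈ ε + 2^(l+2) + 2^(l+3)ℤ_2`, one has `ν_2(x^m - x) = t + l + 2`. -/
theorem monomial_Z2_one_mod_four_valuation (m : ℕ) (hm : 2 ≤ m) (hmod : m % 4 = 1) :
    2 ≤ padicValNat 2 (m - 1) ∧
    ∀ l : ℕ, ∀ ε : ℤ_[2], (ε = 1 ∨ ε = -1) →
      ∀ x : ℤ_[2], (2 : ℤ_[2]) ^ (l + 3) ∣ (x - (ε + 2 ^ (l + 2))) →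
        (x ^ m - x).valuation = (padicValNat 2 (m - 1) : ℤ) + l + 2 := by
  have hm1 : m - 1 ≠ 0 := by omega
  refine ⟨(padicValNat_dvd_iff_le hm1).1 (by omega : 2 ^ 2 ∣ m - 1), ?_⟩
  intro l ε hε x ⟨z, hz⟩
  have hεsq : ε * ε = 1 := by rcases hε with rfl | rfl <;> ring
  have hεx : ε * x = 1 + 2 ^ (l + 2) * (ε * (1 + 2 * z)) := by
    linear_combination ε * hz + hεsq
  have hw : IsUnit (ε * (1 + 2 * z)) :=
    (IsUnit.of_mul_eq_one ε hεsq).mul (isUnit_add_of_dvd isUnit_one (by simp))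
  have hx : IsUnit x := isUnit_of_mul_isUnit_right (x := ε) <|
    hεx ▸ isUnit_add_of_dvd isUnit_one (dvd_mul_of_dvd_left (dvd_pow_self 2 (by omega)) _)
  obtain ⟨u, hu, hpow⟩ := exists_isUnit_one_add_two_pow_mul_pow le_add_self hw hm1
  have hxm : x ^ m - x = 2 ^ (l + 2 + padicValNat 2 (m - 1)) * (x * u) := by
    obtain ⟨j, hj⟩ : 2 ∣ m - 1 := by omega
    have hεpow : ε ^ (m - 1) = 1 := by rw [hj, pow_mul, sq, hεsq, one_pow]
    have hxpow : x ^ (m - 1) = (ε * x) ^ (m - 1) := by rw [mul_pow, hεpow, one_mul]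
    rw [show m = m - 1 + 1 by omega, pow_succ, Nat.add_sub_cancel, hxpow, hεx, hpow]
    ring
  rw [hxm, show (2 : ℤ_[2]) = (2 : ℕ) by norm_num, valuation_p_pow_mul_of_isUnit _ (hx.mul hu)]
  push_cast
  ring
end

section
/- Let m ≥ 2 be an integer with m ≡ 3 (mod 4), let f(x) = x^m on ℤ_2, and let t = ν_2(m + 1) (so t ≥ 2). Then for every integer l ≥ 0, every sign ε ∈ {1, −1}, every a ∈ {1, 3}, and every x ∈ ε + 2^(l+2)·a + 2^(l+4)ℤ_2, one has ν_2(x^(m²) − x) = t + l + 3. -/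
/-!
Write `x = ε (1 + 2^(l+2) c)` with `c` odd. As `m²` is odd and `ε² = 1`,
`x^(m²) - x = x ((1 + 2^(l+2) c)^(m²-1) - 1)`, and lifting the exponent at `2` for a base
`≡ 1 (mod 4)` gives valuation `(l + 2) + ν₂(m² - 1) = (l + 2) + (t + 1)`, because
`m - 1 ≡ 2 (mod 4)`.
-/

section TwoAdicLiftingTheExponent

variable {R : Type*} [CommRing R]

lemma not_two_dvd_natCast_of_odd (h2 : Prime (2 : R)) {k : ℕ} (hk : Odd k) :
    ¬ (2 : R) ∣ k := by
  obtain ⟨j, rfl⟩ := hk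
  intro h
  push_cast at h
  exact h2.not_dvd_one <| (dvd_add_right (dvd_mul_right 2 (j : R))).1 h

lemma not_two_dvd_one_add (h2 : Prime (2 : R)) {u : R} (hu : 2 ∣ u) : ¬ 2 ∣ 1 + u :=
  fun h => h2.not_dvd_one <| (dvd_add_left hu).1 h

lemma exists_one_add_pow_sub_one_eq_mul_of_odd (h2 : Prime (2 : R)) {u : R} (hu : 2 ∣ u)
    {k : ℕ} (hk : Odd k) : ∃ s : R, ¬ 2 ∣ s ∧ (1 + u) ^ k - 1 = u * s := by
  have hsub : (2 : R) ∣ (1 + u) - 1 := by simpa using hu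
  refine ⟨_, not_dvd_geom_sum₂ h2 hsub (not_two_dvd_one_add h2 hu)
    (not_two_dvd_natCast_of_odd h2 hk), ?_⟩
  have hgeom := geom_sum₂_mul (1 + u) 1 k
  rw [add_sub_cancel_left, one_pow] at hgeom
  rw [← hgeom, mul_comm]

lemma exists_one_add_two_pow_mul_sq (h2 : Prime (2 : R)) {r : ℕ} (hr : 2 ≤ r) {c : R}
    (hc : ¬ 2 ∣ c) : ∃ c' : R, ¬ 2 ∣ c' ∧ (1 + 2 ^ r * c) ^ 2 = 1 + 2 ^ (r + 1) * c' := by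
  obtain ⟨s, rfl⟩ : ∃ s, r = s + 1 := ⟨r - 1, by omega⟩
  have hodd : ¬ (2 : R) ∣ 1 + 2 ^ s * c :=
    not_two_dvd_one_add h2 (dvd_mul_of_dvd_left (dvd_pow_self 2 (by omega)) c)
  refine ⟨c * (1 + 2 ^ s * c), fun h => ?_, by ring⟩
  rcases h2.dvd_or_dvd h with h | h
  exacts [hc h, hodd h]

lemma exists_one_add_two_pow_mul_pow_two_pow (h2 : Prime (2 : R)) {r : ℕ} (hr : 2 ≤ r) {c : R}
    (hc : ¬ 2 ∣ c) (v : ℕ) :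
    ∃ c' : R, ¬ 2 ∣ c' ∧ (1 + 2 ^ r * c) ^ 2 ^ v = 1 + 2 ^ (r + v) * c' := by
  induction v with
  | zero => exact ⟨c, hc, by simp⟩
  | succ v ih =>
    obtain ⟨c', hc', hpow⟩ := ih
    obtain ⟨c'', hc'', hsq⟩ := exists_one_add_two_pow_mul_sq h2 (by omega : 2 ≤ r + v) hc'
    exact ⟨c'', hc'', by rw [pow_succ, pow_mul, hpow, hsq, add_assoc]⟩

theorem exists_one_add_two_pow_mul_pow_sub_one (h2 : Prime (2 : R)) {r : ℕ} (hr : 2 ≤ r)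
    {c : R} (hc : ¬ 2 ∣ c) {k : ℕ} (hk : k ≠ 0) :
    ∃ c' : R, ¬ 2 ∣ c' ∧ (1 + 2 ^ r * c) ^ k - 1 = 2 ^ (r + padicValNat 2 k) * c' := by
  obtain ⟨v, o, ho, rfl⟩ := Nat.exists_eq_two_pow_mul_odd hk
  obtain ⟨c', hc', hpow⟩ := exists_one_add_two_pow_mul_pow_two_pow h2 hr hc v
  obtain ⟨s, hs, hodd⟩ := exists_one_add_pow_sub_one_eq_mul_of_odd h2
    (dvd_mul_of_dvd_left (dvd_pow_self 2 (by omega : r + v ≠ 0)) c') ho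
  have hval : padicValNat 2 (2 ^ v * o) = v := by
    rw [padicValNat.mul (by positivity) ho.pos.ne', padicValNat.prime_pow,
      padicValNat.eq_zero_of_not_dvd ho.not_two_dvd_nat, add_zero]
  refine ⟨c' * s, fun h => ?_, ?_⟩
  · rcases h2.dvd_or_dvd h with h | h
    exacts [hc' h, hs h]
  · rw [hval, pow_mul, hpow, hodd, mul_assoc]

lemma not_two_dvd_of_sq_eq_one (h2 : Prime (2 : R)) {ε : R} (hε : ε ^ 2 = 1) : ¬ 2 ∣ ε :=
  fun h => h2.not_dvd_one <| hε ▸ dvd_pow h two_ne_zero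

theorem exists_pow_sub_self_eq_two_pow_mul (h2 : Prime (2 : R)) {ε c : R} (hε : ε ^ 2 = 1)
    (hc : ¬ 2 ∣ c) {r n : ℕ} (hr : 2 ≤ r) (hn : Odd n) (hn1 : n ≠ 1) :
    ∃ w : R, ¬ 2 ∣ w ∧ (ε * (1 + 2 ^ r * c)) ^ n - ε * (1 + 2 ^ r * c) =
      2 ^ (r + padicValNat 2 (n - 1)) * w := by
  obtain ⟨j, rfl⟩ := hn
  set y := 1 + 2 ^ r * c
  obtain ⟨c', hc', hlte⟩ :=
    exists_one_add_two_pow_mul_pow_sub_one h2 hr hc (k := 2 * j) (by omega)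
  have hy : ¬ 2 ∣ y := not_two_dvd_one_add h2 (dvd_mul_of_dvd_left (dvd_pow_self 2 (by omega)) c)
  refine ⟨ε * y * c', fun h => ?_, ?_⟩
  · rcases h2.dvd_or_dvd h with h | h
    · rcases h2.dvd_or_dvd h with h | h
      exacts [not_two_dvd_of_sq_eq_one h2 hε h, hy h]
    · exact hc' h
  · have hεy : (ε * y) ^ (2 * j) = y ^ (2 * j) := by rw [mul_pow, pow_mul, hε, one_pow, one_mul]
    calc (ε * y) ^ (2 * j + 1) - ε * y = ε * y * ((ε * y) ^ (2 * j) - 1) := by ring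
      _ = _ := by rw [hεy, hlte, Nat.add_sub_cancel]; ring

end TwoAdicLiftingTheExponent

namespace PadicInt

variable {p : ℕ} [Fact p.Prime]

lemma valuation_eq_zero_of_not_dvd {x : ℤ_[p]} (hx : ¬ (p : ℤ_[p]) ∣ x) :
    x.valuation = 0 := by
  have hx0 : x ≠ 0 := by rintro rfl; exact hx (dvd_zero _)
  have hval := mem_span_pow_iff_le_valuation x hx0 1
  rw [pow_one, Ideal.mem_span_singleton] at hval
  exact Nat.lt_one_iff.1 (not_le.1 (mt hval.2 hx))

lemma valuation_pow_mul_of_not_dvd (n : ℕ) {w : ℤ_[p]} (hw : ¬ (p : ℤ_[p]) ∣ w) :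
    ((p : ℤ_[p]) ^ n * w).valuation = n := by
  rw [valuation_p_pow_mul n w (by rintro rfl; exact hw (dvd_zero _)),
    valuation_eq_zero_of_not_dvd hw, add_zero]

end PadicInt

lemma two_le_padicValNat_two_add_one {m : ℕ} (hmod : m % 4 = 3) : 2 ≤ padicValNat 2 (m + 1) :=
  (padicValNat_dvd_iff_le (by omega)).1 (by omega)

lemma padicValNat_two_sq_sub_one {m : ℕ} (hmod : m % 4 = 3) :
    padicValNat 2 (m ^ 2 - 1) = padicValNat 2 (m + 1) + 1 := by
  obtain ⟨q, rfl⟩ : ∃ q, m = 4 * q + 3 := ⟨m / 4, by omega⟩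
  have hfac : (4 * q + 3) ^ 2 - 1 = (4 * q + 3 + 1) * (2 * (2 * q + 1)) := by
    rw [show (4 * q + 3) ^ 2 = (4 * q + 3 + 1) * (2 * (2 * q + 1)) + 1 by ring,
      Nat.add_sub_cancel]
  rw [hfac, padicValNat.mul (by omega) (by omega), padicValNat.mul (by omega) (by omega),
    padicValNat.self one_lt_two, padicValNat.eq_zero_of_not_dvd (show ¬ 2 ∣ 2 * q + 1 by omega)]

theorem monomial_Z2_three_mod_four_valuation_general (m : ℕ) (hmod : m % 4 = 3) :
    2 ≤ padicValNat 2 (m + 1) ∧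
    ∀ l : ℕ, ∀ ε : ℤ_[2], (ε = 1 ∨ ε = -1) → ∀ a : ℕ, (a = 1 ∨ a = 3) →
      ∀ x : ℤ_[2], (2 : ℤ_[2]) ^ (l + 4) ∣ (x - (ε + 2 ^ (l + 2) * (a : ℤ_[2]))) →
        (x ^ m ^ 2 - x).valuation = (padicValNat 2 (m + 1) : ℤ) + l + 3 := by
  have h2 : Prime (2 : ℤ_[2]) := by exact_mod_cast PadicInt.prime_p (p := 2)
  refine ⟨two_le_padicValNat_two_add_one hmod, fun l ε hε a ha x ⟨z, hz⟩ => ?_⟩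
  have hεsq : ε ^ 2 = 1 := by rcases hε with rfl | rfl <;> norm_num
  have hunit : ¬ (2 : ℤ_[2]) ∣ a + 4 * z := fun h => not_two_dvd_natCast_of_odd h2
    (by rcases ha with rfl | rfl <;> decide) <|
      (dvd_add_left (dvd_mul_of_dvd_left ⟨2, by norm_num⟩ z)).1 h
  have hc : ¬ (2 : ℤ_[2]) ∣ ε * (a + 4 * z) := fun h => (h2.dvd_or_dvd h).elim
    (not_two_dvd_of_sq_eq_one h2 hεsq) hunit
  have hx : x = ε * (1 + 2 ^ (l + 2) * (ε * (a + 4 * z))) := by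
    linear_combination hz - 2 ^ (l + 2) * (a + 4 * z) * hεsq
  have hmsq : Odd (m ^ 2) := (Nat.odd_iff.2 (by omega)).pow
  obtain ⟨w, hw, hpow⟩ := exists_pow_sub_self_eq_two_pow_mul h2 hεsq hc
    (by omega : 2 ≤ l + 2) hmsq (Nat.one_lt_pow two_ne_zero (by omega)).ne'
  rw [hx, hpow, ← Nat.cast_ofNat (R := ℤ_[2]) (n := 2),
    PadicInt.valuation_pow_mul_of_not_dvd _ (by exact_mod_cast hw),
    padicValNat_two_sq_sub_one hmod]
  push_cast
  ring

/-- For `m ≡ 3 (mod 4)`, `t = ν_2(m+1) ≥ 2`, and any `l ≥ 0`, `ε = ±1`, `a ∈ {1,3}`, and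
`x ∈ ε + 2^(l+2)·a + 2^(l+4)ℤ_2`, one has `ν_2(x^(m²) - x) = t + l + 3`. -/
theorem monomial_Z2_three_mod_four_valuation (m : ℕ) (hm : 2 ≤ m) (hmod : m % 4 = 3) :
    2 ≤ padicValNat 2 (m + 1) ∧
    ∀ l : ℕ, ∀ ε : ℤ_[2], (ε = 1 ∨ ε = -1) → ∀ a : ℕ, (a = 1 ∨ a = 3) →
      ∀ x : ℤ_[2], (2 : ℤ_[2]) ^ (l + 4) ∣ (x - (ε + 2 ^ (l + 2) * (a : ℤ_[2]))) →
        (x ^ m ^ 2 - x).valuation = (padicValNat 2 (m + 1) : ℤ) + l + 3 :=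
  monomial_Z2_three_mod_four_valuation_general m hmod
end

section
/- Let m ≥ 2 be an integer with m ≡ 1 (mod 4), let f(x) = x^m on ℤ_2, and let t = ν_2(m − 1). For each integer l ≥ 0, each a ∈ {0, 1, …, 2^(t−1) − 1}, and each sign ε ∈ {1, −1}, set M_{l,a,ε} = ε + 2^(l+2) + 2^(l+3)·a + 2^(t+l+2)ℤ_2. Then the sets M_{l,a,ε} are pairwise disjoint clopen subsets of ℤ_2, each M_{l,a,ε} is a minimal component of f (f(M_{l,a,ε}) ⊆ M_{l,a,ε} and every forward orbit of f in M_{l,a,ε} is dense in M_{l,a,ε}), and the union of all the M_{l,a,ε} together with the fixed-point set {1, −1} equals the set of 2-adic units ℤ_2 \ 2ℤ_2. -/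
/-!
Write `ν` for the `2`-adic valuation. For `x ≡ ε (mod 4)` with `ε = ±1`, lifting the exponent
gives `ν (x ^ m ^ n - x) = ν (x - ε) + t + ν n`. On `M_{l,a,ε}` one has `ν (x - ε) = l + 2`, so
`x ↦ x ^ m` preserves `M_{l,a,ε}`, and the orbit points `x ^ m ^ i`, `i < 2 ^ N`, are pairwise
incongruent modulo `2 ^ (t + l + 2 + N)`. Since `M_{l,a,ε}` consists of exactly `2 ^ N` classes
modulo that power, the orbit meets all of them, which is density. The components are told apart
by `ε` (the class mod `4`), by `l` (from `ν (x - ε)`) and by `a` (the next `t - 1` binary digits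
of `x`); the same digits place every unit other than `±1` in some component.
-/

theorem not_dvd_of_dvd_sub_of_isUnit {R : Type*} [CommRing R] {p x u : R} (hp : ¬IsUnit p)
    (hu : IsUnit u) (h : p ∣ x - u) : ¬p ∣ x := fun hx =>
  hp (isUnit_of_dvd_unit (by simpa using dvd_sub hx h) hu)

section LiftingTheExponent

variable {R : Type*} [CommRing R] [IsDomain R]

theorem emultiplicity_two_pow_two_pow_add_pow_two_pow (h2 : Prime (2 : R)) {x y : R}
    (hxy : 2 ^ 2 ∣ x - y) (hx : ¬2 ∣ x) (i : ℕ) :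
    emultiplicity 2 (x ^ 2 ^ i + y ^ 2 ^ i) = 1 := by
  have h2xy : 2 ∣ x - y := (dvd_pow_self 2 two_ne_zero).trans hxy
  have hy : ¬2 ∣ y := fun hy => hx (by simpa using dvd_add h2xy hy)
  have hsub : 2 ^ 2 ∣ x ^ 2 ^ i - y ^ 2 ^ i := hxy.trans (sub_dvd_pow_sub_pow x y _)
  have hsum : x ^ 2 ^ i + y ^ 2 ^ i = 2 * y ^ 2 ^ i + (x ^ 2 ^ i - y ^ 2 ^ i) := by ring
  rw [hsum]
  refine mod_cast (emultiplicity_eq_coe (n := 1)).2 ⟨?_, fun h => hy ?_⟩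
  · rw [pow_one]
    exact dvd_add (dvd_mul_right _ _) ((dvd_pow_self 2 two_ne_zero).trans hsub)
  · have h4 : 2 * 2 ∣ 2 * y ^ 2 ^ i := by rw [← pow_two]; exact (dvd_add_left hsub).mp h
    exact h2.dvd_of_dvd_pow ((mul_dvd_mul_iff_left h2.ne_zero).mp h4)

theorem emultiplicity_two_pow_sub_pow (h2 : Prime (2 : R)) {x y : R} (hxy : 2 ^ 2 ∣ x - y)
    (hx : ¬2 ∣ x) (n : ℕ) :
    emultiplicity 2 (x ^ n - y ^ n) = emultiplicity 2 (x - y) + emultiplicity 2 (n : R) := by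
  rcases eq_or_ne n 0 with rfl | hn
  · simp
  obtain ⟨k, n', ⟨j, rfl⟩, rfl⟩ := Nat.exists_eq_two_pow_mul_odd hn
  have hodd : ¬2 ∣ ((2 * j + 1 : ℕ) : R) :=
    not_dvd_of_dvd_sub_of_isUnit h2.not_isUnit isUnit_one (by simp)
  have h2k : emultiplicity 2 (x ^ 2 ^ k - y ^ 2 ^ k) = emultiplicity 2 (x - y) + k := by
    simp only [pow_two_pow_sub_pow_two_pow k, emultiplicity_mul h2, Finset.emultiplicity_prod h2,
      emultiplicity_two_pow_two_pow_add_pow_two_pow h2 hxy hx, Finset.sum_const,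
      Finset.card_range, nsmul_one, add_comm]
  rw [pow_mul, pow_mul, emultiplicity_pow_sub_pow_of_prime h2 ?_ ?_ hodd, h2k, Nat.cast_mul,
    Nat.cast_pow, Nat.cast_ofNat, emultiplicity_mul h2, emultiplicity_pow_self_of_prime h2,
    emultiplicity_eq_zero.2 hodd, add_zero]
  · exact (dvd_pow_self 2 two_ne_zero).trans (hxy.trans (sub_dvd_pow_sub_pow _ _ _))
  · exact fun h => hx (h2.dvd_of_dvd_pow h)

theorem emultiplicity_pow_pow_sub_self (h2 : Prime (2 : R)) {x ε : R} (hε : ε ^ 2 = 1)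
    (hx : 2 ^ 2 ∣ x - ε) {m : ℕ} (hm : m % 4 = 1) (n : ℕ) :
    emultiplicity 2 (x ^ m ^ n - x) =
      emultiplicity 2 (x - ε) + emultiplicity 2 ((m : R) - 1) + emultiplicity 2 (n : R) := by
  have hx2 : ¬2 ∣ x := not_dvd_of_dvd_sub_of_isUnit h2.not_isUnit
    (IsUnit.of_pow_eq_one hε two_ne_zero) ((dvd_pow_self 2 two_ne_zero).trans hx)
  obtain ⟨q, hq⟩ : ∃ q, m = 4 * q + 1 := ⟨m / 4, by omega⟩
  have hm4 : 2 ^ 2 ∣ (m : R) - 1 := ⟨q, by rw [hq]; push_cast; ring⟩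
  have hm2 : ¬2 ∣ (m : R) := not_dvd_of_dvd_sub_of_isUnit h2.not_isUnit isUnit_one
    ((dvd_pow_self 2 two_ne_zero).trans hm4)
  have hmn : 1 ≤ m ^ n := Nat.one_le_pow _ _ (by omega)
  obtain ⟨j, hj⟩ : Even (m ^ n - 1) :=
    Nat.Odd.sub_odd (Odd.pow (Nat.odd_iff.2 (by omega))) odd_one
  have hfactor : x ^ m ^ n - x = x * (x ^ (m ^ n - 1) - ε ^ (m ^ n - 1)) := by
    have hεk : ε ^ (m ^ n - 1) = 1 := by rw [hj, ← two_mul, pow_mul, hε, one_pow]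
    rw [hεk, mul_sub, mul_one, ← pow_succ', Nat.sub_add_cancel hmn]
  have hmn' : ((m ^ n - 1 : ℕ) : R) = (m : R) ^ n - 1 ^ n := by
    rw [Nat.cast_sub hmn, one_pow]; push_cast; ring
  rw [hfactor, emultiplicity_mul h2, emultiplicity_eq_zero.2 hx2, zero_add,
    emultiplicity_two_pow_sub_pow h2 hx hx2, hmn', emultiplicity_two_pow_sub_pow h2 hm4 hm2,
    add_assoc]

end LiftingTheExponent

theorem two_le_padicValNat_sub_one {m : ℕ} (hm : 2 ≤ m) (hmod : m % 4 = 1) :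
    2 ≤ padicValNat 2 (m - 1) :=
  (padicValNat_dvd_iff_le (by omega)).1 (by omega)

namespace PadicInt

variable {p : ℕ} [Fact p.Prime]

theorem emultiplicity_natCast (n : ℕ) :
    emultiplicity (p : ℤ_[p]) (n : ℤ_[p]) = emultiplicity p n := by
  rw [← Int.natCast_emultiplicity, emultiplicity_eq_emultiplicity_iff]
  intro k
  exact_mod_cast pow_p_dvd_int_iff k (n : ℤ)

theorem toZModPow_eq_toZModPow_iff (n : ℕ) (x y : ℤ_[p]) :
    toZModPow n x = toZModPow n y ↔ (p : ℤ_[p]) ^ n ∣ x - y := by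
  rw [← sub_eq_zero, ← map_sub, ← RingHom.mem_ker, ker_toZModPow, Ideal.mem_span_singleton]

theorem setOf_pow_dvd_sub_eq_closedBall (n : ℕ) (b : ℤ_[p]) :
    {x : ℤ_[p] | (p : ℤ_[p]) ^ n ∣ x - b} = Metric.closedBall b ((p : ℝ) ^ (-n : ℤ)) := by
  ext x
  rw [Metric.mem_closedBall, dist_eq_norm, norm_le_pow_iff_mem_span_pow, Ideal.mem_span_singleton]
  rfl

theorem isClopen_setOf_pow_dvd_sub (n : ℕ) (b : ℤ_[p]) :
    IsClopen {x : ℤ_[p] | (p : ℤ_[p]) ^ n ∣ x - b} := by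
  rw [setOf_pow_dvd_sub_eq_closedBall]
  exact IsUltrametricDist.isClopen_closedBall b
    (zpow_pos (Nat.cast_pos.2 (Fact.out : p.Prime).pos) _).ne'

theorem mem_closure_of_forall_exists_pow_dvd_sub {s : Set ℤ_[p]} {z : ℤ_[p]}
    (h : ∀ N : ℕ, ∃ y ∈ s, (p : ℤ_[p]) ^ N ∣ y - z) : z ∈ closure s := by
  rw [Metric.mem_closure_iff]
  intro δ hδ
  obtain ⟨N, hN⟩ := exists_pow_neg_lt p hδ
  obtain ⟨y, hys, hy⟩ := h N
  have hyz : y ∈ Metric.closedBall z ((p : ℝ) ^ (-N : ℤ)) := by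
    rw [← setOf_pow_dvd_sub_eq_closedBall]
    exact hy
  exact ⟨y, hys, (dist_comm z y).trans_le hyz |>.trans_lt hN⟩

theorem exists_pow_add_dvd_sub_of_pairwise_not_dvd {c K : ℕ} {x z : ℤ_[p]} (s : ℕ → ℤ_[p])
    (hs : ∀ i, (p : ℤ_[p]) ^ c ∣ s i - x)
    (hpair : ∀ i j, i < j → j < p ^ K → ¬(p : ℤ_[p]) ^ (c + K) ∣ s j - s i)
    (hz : (p : ℤ_[p]) ^ c ∣ z - x) : ∃ i, (p : ℤ_[p]) ^ (c + K) ∣ s i - z := by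
  choose q hq using hs
  obtain ⟨r, hr⟩ := hz
  have : NeZero (p ^ K) := ⟨pow_ne_zero _ (Fact.out : p.Prime).ne_zero⟩
  let g : Fin (p ^ K) → ZMod (p ^ K) := fun i => toZModPow K (q i)
  have hg : Function.Injective g := by
    intro i j hij
    by_contra hne
    have hdvd : ∀ i j : Fin (p ^ K), g i = g j → (p : ℤ_[p]) ^ (c + K) ∣ s j - s i := by
      intro i j h
      rw [show s j - s i = p ^ c * (q j - q i) by linear_combination hq j - hq i, pow_add]
      exact mul_dvd_mul_left _ ((toZModPow_eq_toZModPow_iff K _ _).1 h.symm)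
    rcases lt_or_gt_of_ne (Fin.val_ne_of_ne hne) with h | h
    · exact hpair i j h j.2 (hdvd i j hij)
    · exact hpair j i h i.2 (hdvd j i hij.symm)
  obtain ⟨i, hi⟩ := ((Fintype.bijective_iff_injective_and_card g).2 ⟨hg, by simp⟩).2
    (toZModPow K r)
  refine ⟨i, ?_⟩
  rw [show s i - z = p ^ c * (q i - r) by linear_combination hq i - hr, pow_add]
  exact mul_dvd_mul_left _ ((toZModPow_eq_toZModPow_iff K _ _).1 hi)

theorem prime_two : Prime (2 : ℤ_[2]) := by
  simpa using prime_p (p := 2)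

theorem emultiplicity_two_natCast_sub_one {m : ℕ} (hm : 2 ≤ m) :
    emultiplicity (2 : ℤ_[2]) ((m : ℤ_[2]) - 1) = padicValNat 2 (m - 1) := by
  rw [padicValNat_eq_emultiplicity (by omega), ← emultiplicity_natCast,
    Nat.cast_sub (by omega : 1 ≤ m), Nat.cast_one, Nat.cast_ofNat]

theorem exists_sign_sq_dvd_sub {x : ℤ_[2]} (hx : ¬2 ∣ x) :
    ∃ ε : ℤ_[2], (ε = 1 ∨ ε = -1) ∧ 2 ^ 2 ∣ x - ε := by
  have hr := appr_lt x 2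
  obtain ⟨y, hy⟩ := Ideal.mem_span_singleton.1 (appr_spec 2 x)
  push_cast at hy
  interval_cases x.appr 2
  · exact absurd ⟨2 * y, by linear_combination hy⟩ hx
  · exact ⟨1, .inl rfl, y, by simpa using hy⟩
  · exact absurd ⟨1 + 2 * y, by linear_combination hy⟩ hx
  · exact ⟨-1, .inr rfl, y + 1, by linear_combination hy⟩

theorem sign_eq_of_sq_dvd_sub {x ε ε' : ℤ_[2]} (hε : ε = 1 ∨ ε = -1) (hε' : ε' = 1 ∨ ε' = -1)
    (h : 2 ^ 2 ∣ x - ε) (h' : 2 ^ 2 ∣ x - ε') : ε = ε' := by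
  have h4 : (2 : ℤ_[2]) ^ 2 ∣ ε' - ε := by simpa using dvd_sub h h'
  have h42 : ¬(2 : ℤ_[2]) ^ 2 ∣ 2 := by
    simpa using (pow_dvd_pow_iff prime_two.ne_zero prime_two.not_isUnit (n := 2) (m := 1)).not.2
      (by omega)
  rcases hε with rfl | rfl <;> rcases hε' with rfl | rfl
  · rfl
  · exact absurd (by simpa [one_add_one_eq_two] using dvd_neg.2 h4) h42
  · exact absurd (by simpa [one_add_one_eq_two] using h4) h42
  · rfl

theorem exists_two_pow_dvd_sub_odd {t : ℕ} (ht : 1 ≤ t) {u : ℤ_[2]} (hu : ¬2 ∣ u) :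
    ∃ a : ℕ, a < 2 ^ (t - 1) ∧ 2 ^ t ∣ u - (1 + 2 * (a : ℤ_[2])) := by
  obtain ⟨y, hy⟩ := Ideal.mem_span_singleton.1 (appr_spec t u)
  rw [Nat.cast_ofNat] at hy
  have hlt := appr_lt u t
  have hpow : 2 ^ t = 2 * 2 ^ (t - 1) := by rw [← pow_succ']; congr; omega
  have hodd : u.appr t % 2 = 1 := by
    by_contra h
    have hw : (u.appr t : ℤ_[2]) = 2 * (u.appr t / 2 : ℕ) := by
      exact_mod_cast (by omega : u.appr t = 2 * (u.appr t / 2))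
    have h2t : (2 : ℤ_[2]) ^ t = 2 * 2 ^ (t - 1) := by exact_mod_cast hpow
    exact hu ⟨(u.appr t / 2 : ℕ) + 2 ^ (t - 1) * y, by linear_combination hy + hw + y * h2t⟩
  have hw : (u.appr t : ℤ_[2]) = 1 + 2 * (u.appr t / 2 : ℕ) := by
    exact_mod_cast (by omega : u.appr t = 1 + 2 * (u.appr t / 2))
  exact ⟨u.appr t / 2, by omega, y, by linear_combination hy + hw⟩

end PadicInt

open PadicInt

def minimalComponent (t l a : ℕ) (ε : ℤ_[2]) : Set ℤ_[2] :=
  {x | (2 : ℤ_[2]) ^ (t + l + 2) ∣ x - (ε + 2 ^ (l + 2) + 2 ^ (l + 3) * (a : ℤ_[2]))}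

section minimalComponent

variable {m t l a l' a' : ℕ} {ε ε' x y : ℤ_[2]}

theorem mem_minimalComponent : x ∈ minimalComponent t l a ε ↔
    2 ^ (t + l + 2) ∣ x - (ε + 2 ^ (l + 2) + 2 ^ (l + 3) * (a : ℤ_[2])) :=
  Iff.rfl

theorem mem_minimalComponent_of_dvd_sub (hx : x ∈ minimalComponent t l a ε)
    (h : 2 ^ (t + l + 2) ∣ y - x) : y ∈ minimalComponent t l a ε := by
  rw [mem_minimalComponent] at hx ⊢
  simpa only [sub_add_sub_cancel] using dvd_add h hx

theorem dvd_sub_of_mem_minimalComponent (hx : x ∈ minimalComponent t l a ε)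
    (hy : y ∈ minimalComponent t l a ε) : 2 ^ (t + l + 2) ∣ y - x := by
  simpa only [sub_sub_sub_cancel_right] using dvd_sub hy hx

theorem isClopen_minimalComponent : IsClopen (minimalComponent t l a ε) := by
  have := isClopen_setOf_pow_dvd_sub (p := 2) (t + l + 2) (ε + 2 ^ (l + 2) + 2 ^ (l + 3) * a)
  rwa [Nat.cast_ofNat] at this

theorem emultiplicity_sub_of_mem_minimalComponent (ht : 1 ≤ t)
    (hx : x ∈ minimalComponent t l a ε) : emultiplicity 2 (x - ε) = ↑(l + 2) := by
  have hodd : ¬2 ∣ (1 + 2 * a : ℤ_[2]) :=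
    not_dvd_of_dvd_sub_of_isUnit prime_two.not_isUnit isUnit_one (by simp)
  have hcenter : emultiplicity 2 ((2 : ℤ_[2]) ^ (l + 2) * (1 + 2 * a)) = ↑(l + 2) := by
    rw [emultiplicity_mul prime_two, emultiplicity_pow_self_of_prime prime_two,
      emultiplicity_eq_zero.2 hodd, add_zero]
  have hfar : ↑(l + 2) < emultiplicity 2 (x - (ε + 2 ^ (l + 2) + 2 ^ (l + 3) * (a : ℤ_[2]))) :=
    lt_of_lt_of_le (by exact_mod_cast (by omega : l + 2 < t + l + 2))
      (le_emultiplicity_of_pow_dvd hx)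
  rw [show x - ε = x - (ε + 2 ^ (l + 2) + 2 ^ (l + 3) * (a : ℤ_[2])) + 2 ^ (l + 2) * (1 + 2 * a)
    by ring, emultiplicity_add_of_gt (hcenter ▸ hfar), hcenter]

theorem not_two_dvd_of_mem_minimalComponent (ht : 1 ≤ t) (hε : ε = 1 ∨ ε = -1)
    (hx : x ∈ minimalComponent t l a ε) : ¬2 ∣ x := by
  refine not_dvd_of_dvd_sub_of_isUnit (u := ε) prime_two.not_isUnit ?_ (pow_one (2 : ℤ_[2]) ▸
    pow_dvd_of_le_emultiplicity ?_)
  · rcases hε with rfl | rfl <;> simp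
  · rw [emultiplicity_sub_of_mem_minimalComponent ht hx]
    exact_mod_cast (by omega : 1 ≤ l + 2)

theorem eq_of_mem_minimalComponent (ht : 1 ≤ t) (ha : a < 2 ^ (t - 1)) (ha' : a' < 2 ^ (t - 1))
    (hε : ε = 1 ∨ ε = -1) (hε' : ε' = 1 ∨ ε' = -1) (hx : x ∈ minimalComponent t l a ε)
    (hx' : x ∈ minimalComponent t l' a' ε') : (l, a, ε) = (l', a', ε') := by
  have hv := emultiplicity_sub_of_mem_minimalComponent ht hx
  have hv' := emultiplicity_sub_of_mem_minimalComponent ht hx'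
  have h4 : ∀ {k : ℕ} {δ : ℤ_[2]}, emultiplicity 2 (x - δ) = ↑(k + 2) → 2 ^ 2 ∣ x - δ :=
    fun h => pow_dvd_of_le_emultiplicity (by rw [h]; exact_mod_cast (by omega))
  obtain rfl := sign_eq_of_sq_dvd_sub hε hε' (h4 hv) (h4 hv')
  obtain rfl : l = l' := by
    have : l + 2 = l' + 2 := by exact_mod_cast hv.symm.trans hv'
    omega
  have hd := dvd_sub hx hx'
  rw [show x - (ε + 2 ^ (l + 2) + 2 ^ (l + 3) * (a : ℤ_[2])) -
      (x - (ε + 2 ^ (l + 2) + 2 ^ (l + 3) * (a' : ℤ_[2]))) = 2 ^ (l + 3) * ((a' - a : ℤ) : ℤ_[2])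
      by push_cast; ring, show t + l + 2 = l + 3 + (t - 1) by omega, pow_add,
    mul_dvd_mul_iff_left (pow_ne_zero _ prime_two.ne_zero)] at hd
  have hmod : a ≡ a' [MOD 2 ^ (t - 1)] := by
    rw [Nat.modEq_iff_dvd]
    have := (pow_p_dvd_int_iff (p := 2) (t - 1) (a' - a)).1 (by rwa [Nat.cast_ofNat])
    exact_mod_cast this
  rw [hmod.eq_of_lt_of_lt ha ha']

theorem emultiplicity_pow_pow_sub_self_of_mem_minimalComponent (hm : 2 ≤ m) (hmod : m % 4 = 1)
    (ht : t = padicValNat 2 (m - 1)) (hε : ε = 1 ∨ ε = -1) (hx : x ∈ minimalComponent t l a ε)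
    (n : ℕ) : emultiplicity 2 (x ^ m ^ n - x) = ↑(t + l + 2) + emultiplicity 2 n := by
  have hxε := emultiplicity_sub_of_mem_minimalComponent
    (by have := two_le_padicValNat_sub_one hm hmod; omega) hx
  have h4 : (2 : ℤ_[2]) ^ 2 ∣ x - ε :=
    pow_dvd_of_le_emultiplicity (by rw [hxε]; exact_mod_cast (by omega : 2 ≤ l + 2))
  have hn : emultiplicity (2 : ℤ_[2]) (n : ℤ_[2]) = emultiplicity 2 n := by
    have := emultiplicity_natCast (p := 2) n
    rwa [Nat.cast_ofNat] at this
  rw [emultiplicity_pow_pow_sub_self prime_two (by rcases hε with rfl | rfl <;> norm_num) h4 hmod,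
    hxε, emultiplicity_two_natCast_sub_one hm, ← ht, hn]
  push_cast
  ring

theorem pow_pow_mem_minimalComponent (hm : 2 ≤ m) (hmod : m % 4 = 1)
    (ht : t = padicValNat 2 (m - 1)) (hε : ε = 1 ∨ ε = -1) (hx : x ∈ minimalComponent t l a ε)
    (n : ℕ) : x ^ m ^ n ∈ minimalComponent t l a ε := by
  refine mem_minimalComponent_of_dvd_sub hx (pow_dvd_of_le_emultiplicity ?_)
  rw [emultiplicity_pow_pow_sub_self_of_mem_minimalComponent hm hmod ht hε hx]
  exact le_self_add

theorem minimalComponent_subset_closure_orbit (hm : 2 ≤ m) (hmod : m % 4 = 1)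
    (ht : t = padicValNat 2 (m - 1)) (hε : ε = 1 ∨ ε = -1) (hx : x ∈ minimalComponent t l a ε) :
    minimalComponent t l a ε ⊆ closure (Set.range fun n : ℕ => x ^ m ^ n) := by
  intro z hz
  have horbit := pow_pow_mem_minimalComponent hm hmod ht hε hx
  refine mem_closure_of_forall_exists_pow_dvd_sub (p := 2) fun N => ?_
  have hpair : ∀ i j, i < j → j < 2 ^ N →
      ¬(2 : ℤ_[2]) ^ (t + l + 2 + N) ∣ x ^ m ^ j - x ^ m ^ i := by
    intro i j hij hj
    have hji : ¬2 ^ N ∣ j - i := fun h => absurd (Nat.le_of_dvd (by omega) h) (by omega)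
    rw [← emultiplicity_lt_iff_not_dvd, show x ^ m ^ j = (x ^ m ^ i) ^ m ^ (j - i) by
      rw [← pow_mul, ← pow_add, Nat.add_sub_cancel' hij.le],
      emultiplicity_pow_pow_sub_self_of_mem_minimalComponent hm hmod ht hε (horbit i), Nat.cast_add]
    exact (ENat.add_lt_add_iff_left (ENat.natCast_ne_top _)).2 (emultiplicity_lt_iff_not_dvd.2 hji)
  obtain ⟨n, hn⟩ := exists_pow_add_dvd_sub_of_pairwise_not_dvd (p := 2) (fun n => x ^ m ^ n)
    (by simpa using fun i => dvd_sub_of_mem_minimalComponent hx (horbit i)) (by simpa using hpair)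
    (by simpa using dvd_sub_of_mem_minimalComponent hx hz)
  exact ⟨_, ⟨n, rfl⟩, (pow_dvd_pow _ (Nat.le_add_left N _)).trans hn⟩

theorem exists_mem_minimalComponent (ht : 1 ≤ t) {x : ℤ_[2]} (hx : ¬2 ∣ x) (hx1 : x ≠ 1)
    (hx2 : x ≠ -1) :
    ∃ l, ∃ a < 2 ^ (t - 1), ∃ ε : ℤ_[2], (ε = 1 ∨ ε = -1) ∧ x ∈ minimalComponent t l a ε := by
  obtain ⟨ε, hε, h4⟩ := exists_sign_sq_dvd_sub hx
  have hxε : x - ε ≠ 0 := by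
    rcases hε with rfl | rfl
    exacts [sub_ne_zero.2 hx1, sub_ne_zero.2 hx2]
  have hspec := unitCoeff_spec hxε
  rw [Nat.cast_ofNat] at hspec
  set u : ℤ_[2] := (unitCoeff hxε : ℤ_[2])
  obtain ⟨l, hl⟩ : ∃ l, (x - ε).valuation = l + 2 := by
    rw [hspec, (Units.isUnit _).dvd_mul_left,
      pow_dvd_pow_iff prime_two.ne_zero prime_two.not_isUnit] at h4
    exact ⟨_, (Nat.sub_add_cancel h4).symm⟩
  obtain ⟨a, ha, hua⟩ := exists_two_pow_dvd_sub_odd ht (u := u)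
    (fun h => prime_two.not_isUnit (isUnit_of_dvd_unit h (Units.isUnit _)))
  refine ⟨l, a, ha, ε, hε, ?_⟩
  rw [hl] at hspec
  rw [mem_minimalComponent, show x - (ε + 2 ^ (l + 2) + 2 ^ (l + 3) * (a : ℤ_[2])) =
    2 ^ (l + 2) * (u - (1 + 2 * a)) by linear_combination hspec, show t + l + 2 = l + 2 + t by omega,
    pow_add]
  exact mul_dvd_mul_left _ hua

theorem iUnion_minimalComponent_union_eq (ht : 1 ≤ t) :
    (⋃ l : ℕ, ⋃ a ∈ Finset.range (2 ^ (t - 1)), ⋃ ε ∈ ({1, -1} : Set ℤ_[2]),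
        minimalComponent t l a ε) ∪ {1, -1} = {x : ℤ_[2] | ¬(2 : ℤ_[2]) ∣ x} := by
  ext x
  simp only [Set.mem_union, Set.mem_iUnion, Finset.mem_range, Set.mem_insert_iff,
    Set.mem_singleton_iff, exists_prop, Set.mem_ofPred_eq]
  constructor
  · rintro (⟨l, a, -, ε, hε, hx⟩ | hx)
    · exact not_two_dvd_of_mem_minimalComponent ht hε hx
    · rcases hx with rfl | rfl <;> simpa using prime_two.not_dvd_one
  · intro hx
    by_cases hx1 : x = 1 ∨ x = -1
    · exact .inr hx1
    obtain ⟨hx1, hx2⟩ := not_or.1 hx1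
    exact .inl (exists_mem_minimalComponent ht hx hx1 hx2)

end minimalComponent

/-- Minimal decomposition for `x ↦ x^m` on `ℤ_2` with `m ≡ 1 (mod 4)`:
the sets `M_{l,a,ε} = ε + 2^(l+2) + 2^(l+3)a + 2^(t+l+2)ℤ_2` are pairwise disjoint
clopen minimal components, and together with `{1, -1}` they cover exactly the 2-adic
units. -/
theorem monomial_Z2_one_mod_four_decomposition (m : ℕ) (hm : 2 ≤ m) (hmod : m % 4 = 1)
    (t : ℕ) (ht : t = padicValNat 2 (m - 1))
    (M : ℕ → ℕ → ℤ_[2] → Set ℤ_[2])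
    (hM : ∀ l a ε, M l a ε =
      {x : ℤ_[2] | (2 : ℤ_[2]) ^ (t + l + 2) ∣
        x - (ε + 2 ^ (l + 2) + 2 ^ (l + 3) * (a : ℤ_[2]))}) :
    (∀ l a (ε : ℤ_[2]) l' a' (ε' : ℤ_[2]),
      a < 2 ^ (t - 1) → a' < 2 ^ (t - 1) → (ε = 1 ∨ ε = -1) → (ε' = 1 ∨ ε' = -1) →
      (l, a, ε) ≠ (l', a', ε') → Disjoint (M l a ε) (M l' a' ε')) ∧
    (∀ l a (ε : ℤ_[2]), a < 2 ^ (t - 1) → (ε = 1 ∨ ε = -1) →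
      IsClopen (M l a ε) ∧
      (∀ x ∈ M l a ε, x ^ m ∈ M l a ε) ∧
      (∀ x ∈ M l a ε, M l a ε ⊆ closure (Set.range fun n : ℕ => x ^ m ^ n))) ∧
    ((⋃ l : ℕ, ⋃ a ∈ Finset.range (2 ^ (t - 1)), ⋃ ε ∈ ({1, -1} : Set ℤ_[2]), M l a ε)
        ∪ {1, -1} = {x : ℤ_[2] | ¬ (2 : ℤ_[2]) ∣ x}) := by
  have ht1 : 1 ≤ t := by have := two_le_padicValNat_sub_one hm hmod; omega
  obtain rfl : M = minimalComponent t := by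
    funext l a ε
    exact hM l a ε
  refine ⟨fun l a ε l' a' ε' ha ha' hε hε' hne => Set.disjoint_left.2 fun x hx hx' =>
      hne (eq_of_mem_minimalComponent ht1 ha ha' hε hε' hx hx'),
    fun l a ε _ hε => ⟨isClopen_minimalComponent, fun x hx => ?_,
      fun x hx => minimalComponent_subset_closure_orbit hm hmod ht hε hx⟩,
    iUnion_minimalComponent_union_eq ht1⟩
  simpa using pow_pow_mem_minimalComponent hm hmod ht hε hx 1
end

section
/- Let m ≥ 2 be an integer with m ≡ 5 (mod 20), let f(x) = x^m on ℤ_5, and let 𝕚 be the unique element of ℤ_5 with 𝕚² = −1 and 𝕚 − 2 ∈ 5ℤ_5. Then the set of fixed points of f is exactly {0, 1, −1, 𝕚, −𝕚}; for every x ∈ 5ℤ_5 the iterates f^n(x) = x^(m^n) converge to 0, and for each b ∈ {1, −1, 𝕚, −𝕚} and every x ∈ b + 5ℤ_5 the iterates f^n(x) converge to b as n → ∞. -/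
open Filter Topology

instance : Fact (Nat.Prime 5) := ⟨by norm_num⟩

/-! A nonzero fixed point is a root of unity. By Fermat a root of unity `x` has
`x⁴ ≡ 1 (mod 5)`, and a `u ≡ 1 (mod 5)` with `u^k = 1` and `5 ∤ k` equals `1`, because
`∑_{i<k} uⁱ ≡ k (mod 5)` is then a nonzero factor of `u^k - 1`. So the fixed points are `0`
and the fourth roots of unity `±1, ±𝕚`. For the dynamics, write `x = u b` with
`u ≡ 1 (mod 5)`: since `5 ∣ m`, every application of `f` gains a factor of `5` in `u - 1`,
while `b^m = b`. -/

section

variable {R : Type*} [CommRing R]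

theorem pow_add_one_dvd_pow_pow_sub_one {p m : ℕ} {u : R} (hu : (p : R) ∣ u - 1) (hm : p ∣ m)
    (n : ℕ) : (p : R) ^ (n + 1) ∣ u ^ m ^ n - 1 := by
  obtain ⟨c, rfl⟩ := hm
  have hv : (p : R) ∣ u ^ c ^ n - 1 ^ c ^ n := hu.trans (by simpa using sub_dvd_pow_sub_pow u 1 _)
  simpa [← pow_mul, mul_pow, mul_comm] using dvd_sub_pow_of_dvd_sub hv n

theorem eq_one_of_pow_eq_one_of_dvd_sub_one [IsDomain R] {a u : R} {k : ℕ} (hu : a ∣ u - 1)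
    (hk : ¬a ∣ k) (h : u ^ k = 1) : u = 1 := by
  have hsum : (∑ i ∈ Finset.range k, u ^ i) * (u - 1) = 0 := by rw [geom_sum_mul, h, sub_self]
  have hsum_ne : ∑ i ∈ Finset.range k, u ^ i ≠ 0 := by
    intro h0
    have := (dvd_geom_sum₂_iff_of_dvd_sub (n := k) hu).mp (by simp [h0])
    exact hk (by simpa using this)
  exact sub_eq_zero.mp ((mul_eq_zero.mp hsum).resolve_left hsum_ne)

theorem pow_four_eq_one_iff [IsDomain R] {I : R} (hI : I ^ 2 = -1) (x : R) :
    x ^ 4 = 1 ↔ x = 1 ∨ x = -1 ∨ x = I ∨ x = -I := by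
  have hfac : x ^ 4 - 1 = (x - 1) * (x + 1) * ((x - I) * (x + I)) := by
    linear_combination (x ^ 2 - 1) * hI
  rw [← sub_eq_zero, hfac]
  simp only [mul_eq_zero, sub_eq_zero, add_eq_zero_iff_eq_neg, or_assoc]

end

namespace PadicInt

variable {p : ℕ} [Fact p.Prime]

theorem dvd_iff_toZMod_eq_zero (x : ℤ_[p]) : (p : ℤ_[p]) ∣ x ↔ toZMod x = 0 := by
  rw [← RingHom.mem_ker, ker_toZMod, maximalIdeal_eq_span_p, Ideal.mem_span_singleton]

theorem natCast_dvd_natCast_iff (k : ℕ) : (p : ℤ_[p]) ∣ (k : ℤ_[p]) ↔ p ∣ k := by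
  rw [dvd_iff_toZMod_eq_zero, map_natCast, ZMod.natCast_eq_zero_iff]

theorem dvd_pow_card_sub_one_sub_one {x : ℤ_[p]} (hx : ¬(p : ℤ_[p]) ∣ x) :
    (p : ℤ_[p]) ∣ x ^ (p - 1) - 1 := by
  rw [dvd_iff_toZMod_eq_zero] at hx ⊢
  rw [map_sub, map_pow, map_one, ZMod.pow_card_sub_one_eq_one hx, sub_self]

theorem pow_card_sub_one_eq_one_of_pow_eq_one {k : ℕ} (hk : ¬p ∣ k) {x : ℤ_[p]}
    (hx : x ^ (k * (p - 1)) = 1) : x ^ (p - 1) = 1 := by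
  have hexp : k * (p - 1) ≠ 0 := mul_ne_zero (by rintro rfl; exact hk (dvd_zero p))
    (Nat.sub_ne_zero_of_lt (Fact.out : p.Prime).one_lt)
  have hunit : ¬(p : ℤ_[p]) ∣ x := fun h ↦ prime_p.not_dvd_one (hx ▸ dvd_pow h hexp)
  refine eq_one_of_pow_eq_one_of_dvd_sub_one (k := k) (dvd_pow_card_sub_one_sub_one hunit) ?_ ?_
  · rwa [natCast_dvd_natCast_iff]
  · rw [← pow_mul, mul_comm, hx]

theorem pow_eq_self_iff {k : ℕ} (hk : ¬p ∣ k) (x : ℤ_[p]) :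
    x ^ (k * (p - 1) + 1) = x ↔ x = 0 ∨ x ^ (p - 1) = 1 := by
  rw [pow_succ, mul_comm k, pow_mul]
  constructor
  · intro h
    refine or_iff_not_imp_left.mpr fun hx0 ↦ pow_card_sub_one_eq_one_of_pow_eq_one hk ?_
    rw [mul_comm, pow_mul]
    exact mul_left_cancel₀ hx0 (by rw [mul_one, mul_comm, h])
  · rintro (rfl | h)
    · simp
    · rw [h, one_pow, one_mul]

theorem tendsto_of_forall_pow_dvd_sub {f : ℕ → ℤ_[p]} {L : ℤ_[p]}
    (h : ∀ n, (p : ℤ_[p]) ^ n ∣ f n - L) : Tendsto f atTop (𝓝 L) := by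
  have hp : (1 : ℝ) < p := mod_cast (Fact.out : p.Prime).one_lt
  have hbound : ∀ n, ‖f n - L‖ ≤ (p : ℝ)⁻¹ ^ n := fun n ↦ by
    obtain ⟨c, hc⟩ := h n
    calc ‖f n - L‖ = ‖(p : ℤ_[p])‖ ^ n * ‖c‖ := by rw [hc, norm_mul, norm_pow]
      _ ≤ (p : ℝ)⁻¹ ^ n := by
        rw [norm_p]; exact mul_le_of_le_one_right (by positivity) (norm_le_one c)
  rw [tendsto_iff_norm_sub_tendsto_zero]
  exact squeeze_zero (fun _ ↦ norm_nonneg _) hbound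
    (tendsto_pow_atTop_nhds_zero_of_lt_one (by positivity) (inv_lt_one_of_one_lt₀ hp))

theorem tendsto_pow_pow_of_dvd_sub {m : ℕ} (hm : p ∣ m) {b x : ℤ_[p]} (hb : IsUnit b)
    (hbm : b ^ m = b) (hx : (p : ℤ_[p]) ∣ x - b) :
    Tendsto (fun n ↦ x ^ m ^ n) atTop (𝓝 b) := by
  obtain ⟨b, rfl⟩ := hb
  obtain ⟨u, rfl⟩ : ∃ u, x = u * b := ⟨x * ↑b⁻¹, by simp⟩
  have hu : (p : ℤ_[p]) ∣ u - 1 := by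
    have : u - 1 = (u * b - b) * ↑b⁻¹ := by simp [sub_mul, mul_assoc]
    exact this ▸ dvd_mul_of_dvd_left hx _
  have hbmn : ∀ n, (b : ℤ_[p]) ^ m ^ n = b := fun n ↦ by
    induction n with
    | zero => simp
    | succ n ih => rw [pow_succ, pow_mul, ih, hbm]
  refine tendsto_of_forall_pow_dvd_sub fun n ↦ ?_
  calc (p : ℤ_[p]) ^ n ∣ (p : ℤ_[p]) ^ (n + 1) := pow_dvd_pow _ n.le_succ
    _ ∣ (u ^ m ^ n - 1) * b := dvd_mul_of_dvd_left (pow_add_one_dvd_pow_pow_sub_one hu hm n) _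
    _ = (u * b) ^ m ^ n - b := by rw [mul_pow, hbmn, sub_mul, one_mul]

end PadicInt

theorem monomial_Z5_five_mod_twenty_general (m : ℕ) (hmod : m % 20 = 5)
    (I : ℤ_[5]) (hI2 : I ^ 2 = -1) :
    {x : ℤ_[5] | x ^ m = x} = {0, 1, -1, I, -I} ∧
    (∀ x : ℤ_[5], (5 : ℤ_[5]) ∣ x → Tendsto (fun n : ℕ => x ^ m ^ n) atTop (𝓝 0)) ∧
    (∀ b ∈ ({1, -1, I, -I} : Set ℤ_[5]), ∀ x : ℤ_[5], (5 : ℤ_[5]) ∣ (x - b) →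
      Tendsto (fun n : ℕ => x ^ m ^ n) atTop (𝓝 b)) := by
  obtain ⟨k, rfl⟩ : ∃ k, m = k * (5 - 1) + 1 := ⟨m / 4, by omega⟩
  have hk : ¬5 ∣ k := by omega
  have hfix (x : ℤ_[5]) :
      x ^ (k * (5 - 1) + 1) = x ↔ x = 0 ∨ x = 1 ∨ x = -1 ∨ x = I ∨ x = -I := by
    rw [PadicInt.pow_eq_self_iff hk, show 5 - 1 = 4 from rfl, pow_four_eq_one_iff hI2]
  refine ⟨Set.ext hfix, fun x hx ↦ ?_, fun b hb x hx ↦ ?_⟩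
  · have hx1 : ‖x‖ < 1 := by exact_mod_cast (PadicInt.norm_lt_one_iff_dvd x).mpr hx
    exact (tendsto_pow_atTop_nhds_zero_of_norm_lt_one hx1).comp
      (tendsto_pow_atTop_atTop_of_one_lt (by omega))
  · have hb4 : b ^ 4 = 1 := (pow_four_eq_one_iff hI2 b).mpr hb
    exact PadicInt.tendsto_pow_pow_of_dvd_sub (by omega) (IsUnit.of_pow_eq_one hb4 (by norm_num))
      ((hfix b).mpr (Or.inr hb)) (by exact_mod_cast hx)

/-- For `m ≡ 5 (mod 20)` and `f(x) = x^m` on `ℤ_5`, with `𝕚` the square root of `-1`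
congruent to `2` mod `5`: the fixed points are exactly `{0, 1, -1, 𝕚, -𝕚}`, iterates
of points of `5ℤ_5` converge to `0`, and for each `b ∈ {1, -1, 𝕚, -𝕚}` the iterates of
points of `b + 5ℤ_5` converge to `b`. -/
theorem monomial_Z5_five_mod_twenty (m : ℕ) (hm : 2 ≤ m) (hmod : m % 20 = 5)
    (I : ℤ_[5]) (hI2 : I ^ 2 = -1) (hI5 : (5 : ℤ_[5]) ∣ I - 2) :
    {x : ℤ_[5] | x ^ m = x} = {0, 1, -1, I, -I} ∧
    (∀ x : ℤ_[5], (5 : ℤ_[5]) ∣ x → Tendsto (fun n : ℕ => x ^ m ^ n) atTop (𝓝 0)) ∧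
    (∀ b ∈ ({1, -1, I, -I} : Set ℤ_[5]), ∀ x : ℤ_[5], (5 : ℤ_[5]) ∣ (x - b) →
      Tendsto (fun n : ℕ => x ^ m ^ n) atTop (𝓝 b)) :=
  monomial_Z5_five_mod_twenty_general m hmod I hI2
end

section
/- Let m ≥ 2 be an integer with m ≡ 15 (mod 20), let f(x) = x^m on ℤ_5, and let 𝕚 be the unique element of ℤ_5 with 𝕚² = −1 and 𝕚 − 2 ∈ 5ℤ_5. Then 0, 1, −1 are fixed points of f and {𝕚, −𝕚} is a 2-periodic orbit (f(𝕚) = −𝕚 and f(−𝕚) = 𝕚); for every x ∈ 5ℤ_5 the iterates f^n(x) = x^(m^n) converge to 0, for every x ∈ 1 + 5ℤ_5 they converge to 1, for every x ∈ −1 + 5ℤ_5 they converge to −1, and for every x ∈ 𝕚 + 5ℤ_5 the even iterates f^(2n)(x) = x^(m^(2n)) converge to 𝕚 while for every x ∈ −𝕚 + 5ℤ_5 the even iterates converge to −𝕚 as n → ∞. -/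
open Filter Topology

/-!
If `p ∣ M` and `p ∣ y - 1`, then `y ^ M - 1 = (y - 1) * (1 + y + ⋯ + y ^ (M - 1))` and the second
factor is `≡ M ≡ 0 (mod p)`, so each application of `y ↦ y ^ M` gains a factor of `p`:
`x ^ M ^ n ≡ 1 (mod p ^ (n + 1))`. Applied to `u⁻¹ * x`, this shows that a unit `u` fixed by
`y ↦ y ^ M` attracts all of `u + pℤ_p`. For `m ≡ 15 (mod 20)` we have `5 ∣ m`, the points `±1`
are fixed by `y ↦ y ^ m`, and since `m ≡ 3 (mod 4)` the points `±𝕚` are fixed by `y ↦ y ^ m ^ 2`.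
-/

theorem pow_pow_eq_self_of_pow_eq {M : Type*} [Monoid M] {u : M} {k : ℕ} (h : u ^ k = u)
    (n : ℕ) : u ^ k ^ n = u := by
  induction n with
  | zero => exact pow_one u
  | succ n ih => rw [pow_succ, pow_mul, ih, h]

section CommRing

variable {R : Type*} [CommRing R] {p x u : R} {M : ℕ}

theorem pow_succ_dvd_pow_pow_sub_one (hM : p ∣ (M : R)) (hx : p ∣ x - 1) (n : ℕ) :
    p ^ (n + 1) ∣ x ^ M ^ n - 1 := by
  induction n with
  | zero => simpa using hx
  | succ n ih =>
    have hgeom : p ∣ ∑ i ∈ Finset.range M, (x ^ M ^ n) ^ i := by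
      simpa using (dvd_geom_sum₂_iff_of_dvd_sub (y := 1)
        ((dvd_pow_self p n.succ_ne_zero).trans ih)).2 (by simpa using hM)
    rw [pow_succ' p (n + 1), pow_succ M n, pow_mul, ← geom_sum_mul]
    exact mul_dvd_mul hgeom ih

theorem pow_succ_dvd_pow_pow_sub (hu : IsUnit u) (huM : u ^ M = u) (hM : p ∣ (M : R))
    (hx : p ∣ x - u) (n : ℕ) : p ^ (n + 1) ∣ x ^ M ^ n - u := by
  obtain ⟨v, rfl⟩ := hu
  have hy : p ∣ ↑v⁻¹ * x - 1 := by
    rw [← Units.inv_mul v, ← mul_sub]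
    exact hx.mul_left _
  have hx' : x = v * (↑v⁻¹ * x) := by rw [Units.mul_inv_cancel_left]
  rw [hx', mul_pow, pow_pow_eq_self_of_pow_eq huM, ← mul_sub_one]
  exact (pow_succ_dvd_pow_pow_sub_one hM hy n).mul_left _

end CommRing

namespace PadicInt

variable {p : ℕ} [Fact p.Prime]

theorem tendsto_of_pow_dvd_sub {f : ℕ → ℤ_[p]} {a : ℤ_[p]} {k : ℕ → ℕ}
    (hk : Tendsto k atTop atTop) (h : ∀ n, (p : ℤ_[p]) ^ k n ∣ f n - a) :
    Tendsto f atTop (𝓝 a) := by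
  have hpow : Tendsto (fun n => (p : ℤ_[p]) ^ k n) atTop (𝓝 0) :=
    (tendsto_pow_atTop_nhds_zero_of_norm_lt_one ((norm_lt_one_iff_dvd _).2 dvd_rfl)).comp hk
  rw [← tendsto_sub_nhds_zero_iff]
  refine squeeze_zero_norm (fun n => ?_) (tendsto_zero_iff_norm_tendsto_zero.1 hpow)
  obtain ⟨c, hc⟩ := h n
  rw [hc, norm_mul]
  exact mul_le_of_le_one_right (norm_nonneg _) c.norm_le_one

variable {x u : ℤ_[p]} {M : ℕ}

theorem tendsto_pow_pow_of_dvd (hM : 1 < M) (hx : (p : ℤ_[p]) ∣ x) :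
    Tendsto (fun n => x ^ M ^ n) atTop (𝓝 0) :=
  tendsto_of_pow_dvd_sub (tendsto_pow_atTop_atTop_of_one_lt hM) fun n => by
    simpa using pow_dvd_pow_of_dvd hx (M ^ n)

theorem tendsto_pow_pow_of_dvd_sub_s14 (hu : IsUnit u) (huM : u ^ M = u) (hM : (p : ℤ_[p]) ∣ M)
    (hx : (p : ℤ_[p]) ∣ x - u) : Tendsto (fun n => x ^ M ^ n) atTop (𝓝 u) :=
  tendsto_of_pow_dvd_sub (tendsto_add_atTop_nat 1) (pow_succ_dvd_pow_pow_sub hu huM hM hx)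

end PadicInt

theorem monomial_Z5_fifteen_mod_twenty_general (m : ℕ) (hmod : m % 20 = 15)
    (I : ℤ_[5]) (hI2 : I ^ 2 = -1) :
    (0 : ℤ_[5]) ^ m = 0 ∧ (1 : ℤ_[5]) ^ m = 1 ∧ (-1 : ℤ_[5]) ^ m = -1 ∧
    I ^ m = -I ∧ (-I) ^ m = I ∧
    (∀ x : ℤ_[5], (5 : ℤ_[5]) ∣ x → Tendsto (fun n : ℕ => x ^ m ^ n) atTop (𝓝 0)) ∧
    (∀ x : ℤ_[5], (5 : ℤ_[5]) ∣ (x - 1) →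
      Tendsto (fun n : ℕ => x ^ m ^ n) atTop (𝓝 1)) ∧
    (∀ x : ℤ_[5], (5 : ℤ_[5]) ∣ (x + 1) →
      Tendsto (fun n : ℕ => x ^ m ^ n) atTop (𝓝 (-1))) ∧
    (∀ x : ℤ_[5], (5 : ℤ_[5]) ∣ (x - I) →
      Tendsto (fun n : ℕ => x ^ m ^ (2 * n)) atTop (𝓝 I)) ∧
    (∀ x : ℤ_[5], (5 : ℤ_[5]) ∣ (x + I) →
      Tendsto (fun n : ℕ => x ^ m ^ (2 * n)) atTop (𝓝 (-I))) := by
  have h5m : (5 : ℤ_[5]) ∣ m := by exact_mod_cast Nat.cast_dvd_cast (show 5 ∣ m by omega)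
  have h5m2 : (5 : ℤ_[5]) ∣ (m ^ 2 : ℕ) := by push_cast; exact dvd_pow h5m two_ne_zero
  have hodd : Odd m := ⟨m / 2, by omega⟩
  have hIm : I ^ m = -I := by
    rw [show m = 2 * (2 * (m / 4) + 1) + 1 by omega, pow_succ, pow_mul, hI2,
      Odd.neg_one_pow ⟨m / 4, rfl⟩, neg_one_mul]
  have hmI : (-I) ^ m = I := by rw [hodd.neg_pow, hIm, neg_neg]
  have hI : IsUnit I := IsUnit.of_mul_eq_one (-I) (by linear_combination -hI2)
  refine ⟨zero_pow (by omega), one_pow m, hodd.neg_one_pow, hIm, hmI,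
    fun x hx => ?_, fun x hx => ?_, fun x hx => ?_, fun x hx => ?_, fun x hx => ?_⟩
  · exact PadicInt.tendsto_pow_pow_of_dvd (by omega) hx
  · exact PadicInt.tendsto_pow_pow_of_dvd_sub_s14 isUnit_one (one_pow m) h5m hx
  · exact PadicInt.tendsto_pow_pow_of_dvd_sub_s14 isUnit_one.neg hodd.neg_one_pow h5m
      (by rwa [sub_neg_eq_add])
  · simpa only [← pow_mul] using PadicInt.tendsto_pow_pow_of_dvd_sub_s14 hI
      (by rw [sq, pow_mul, hIm, hmI]) h5m2 hx
  · simpa only [← pow_mul] using PadicInt.tendsto_pow_pow_of_dvd_sub_s14 hI.neg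
      (by rw [sq, pow_mul, hmI, hIm]) h5m2 (by rwa [sub_neg_eq_add])

/-- For `m ≡ 15 (mod 20)` and `f(x) = x^m` on `ℤ_5`, with `𝕚` the square root of `-1`
congruent to `2` mod `5`: `0, 1, -1` are fixed points, `{𝕚, -𝕚}` is a 2-periodic orbit,
iterates of points of `5ℤ_5`, `1 + 5ℤ_5`, `-1 + 5ℤ_5` converge to `0`, `1`, `-1`
respectively, and the even iterates of points of `𝕚 + 5ℤ_5` (resp. `-𝕚 + 5ℤ_5`)
converge to `𝕚` (resp. `-𝕚`). -/
theorem monomial_Z5_fifteen_mod_twenty (m : ℕ) (hm : 2 ≤ m) (hmod : m % 20 = 15)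
    (I : ℤ_[5]) (hI2 : I ^ 2 = -1) (hI5 : (5 : ℤ_[5]) ∣ I - 2) :
    (0 : ℤ_[5]) ^ m = 0 ∧ (1 : ℤ_[5]) ^ m = 1 ∧ (-1 : ℤ_[5]) ^ m = -1 ∧
    I ^ m = -I ∧ (-I) ^ m = I ∧
    (∀ x : ℤ_[5], (5 : ℤ_[5]) ∣ x → Tendsto (fun n : ℕ => x ^ m ^ n) atTop (𝓝 0)) ∧
    (∀ x : ℤ_[5], (5 : ℤ_[5]) ∣ (x - 1) →
      Tendsto (fun n : ℕ => x ^ m ^ n) atTop (𝓝 1)) ∧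
    (∀ x : ℤ_[5], (5 : ℤ_[5]) ∣ (x + 1) →
      Tendsto (fun n : ℕ => x ^ m ^ n) atTop (𝓝 (-1))) ∧
    (∀ x : ℤ_[5], (5 : ℤ_[5]) ∣ (x - I) →
      Tendsto (fun n : ℕ => x ^ m ^ (2 * n)) atTop (𝓝 I)) ∧
    (∀ x : ℤ_[5], (5 : ℤ_[5]) ∣ (x + I) →
      Tendsto (fun n : ℕ => x ^ m ^ (2 * n)) atTop (𝓝 (-I))) :=
  monomial_Z5_fifteen_mod_twenty_general m hmod I hI2
end
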